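/- For every prime p, every ε > 0, and every j not divisible by p, if d ≥ 2·log₂(2p)/ε then there exist k_1, ..., k_d ∈ {0, ..., p−1} such that for all j ∈ {1, ..., p−1}, (1/d²)·(Σ_{i=1}^d cos(2πk_i j / p))² < ε. -/

import Mathlib

/-!
Choose `k : Fin d → Fin p` uniformly at random. For `p ∤ j` the values `cos (2π m j / p)`,
`m < p`, average to zero, so by Hoeffding's lemma each `exp (± t ∑ᵢ cos (2π kᵢ j / p))` has
average at most `exp (d t² / 2)`. Summing over the `2 (p - 1)` choices of sign and residue, some
`k` keeps all of them below `2 (p - 1) exp (d t² / 2)`; with `t = √ε` and `d ε / 2 ≥ log₂ (2p)` this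
bounds every `|∑ᵢ cos (2π kᵢ j / p)|` strictly by `d √ε`.
-/

open Real Finset

theorem sum_cos_two_pi_mul_div_eq_zero {p j : ℕ} (hj : ¬ p ∣ j) :
    ∑ m : Fin p, cos (2 * π * (m : ℕ) * j / p) = 0 := by
  rcases Nat.eq_zero_or_pos p with rfl | hp
  · simp
  have hζ := Complex.isPrimitiveRoot_exp p hp.ne'
  set z := Complex.exp (2 * π * Complex.I / p) ^ j
  have hz : z ≠ 1 := by rwa [Ne, hζ.pow_eq_one_iff_dvd]
  have hzp : z ^ p = 1 := by rw [pow_right_comm, hζ.pow_eq_one, one_pow]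
  have hcos (m : ℕ) : cos (2 * π * m * j / p) = (z ^ m).re := by
    rw [← pow_mul, ← Complex.exp_nat_mul, ← Complex.exp_ofReal_mul_I_re]
    congr 2
    push_cast
    ring
  calc ∑ m : Fin p, cos (2 * π * (m : ℕ) * j / p)
      = (∑ m ∈ range p, z ^ m).re := by
        rw [Complex.re_sum, ← Fin.sum_univ_eq_sum_range]
        exact sum_congr rfl fun m _ ↦ hcos m
    _ = 0 := by rw [geom_sum_eq hz, hzp, sub_self, zero_div, Complex.zero_re]

theorem exp_mul_le_cosh_add_mul_sinh (t : ℝ) {x : ℝ} (hx : |x| ≤ 1) :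
    exp (t * x) ≤ cosh t + x * sinh t := by
  obtain ⟨hx₁, hx₂⟩ := abs_le.mp hx
  have h := convexOn_exp.2 (Set.mem_univ t) (Set.mem_univ (-t))
    (by linarith : 0 ≤ (1 + x) / 2) (by linarith : 0 ≤ (1 - x) / 2) (by ring)
  rw [smul_eq_mul, smul_eq_mul, smul_eq_mul, smul_eq_mul] at h
  calc exp (t * x) = exp ((1 + x) / 2 * t + (1 - x) / 2 * -t) := by ring_nf
    _ ≤ (1 + x) / 2 * exp t + (1 - x) / 2 * exp (-t) := h
    _ = cosh t + x * sinh t := by rw [cosh_eq, sinh_eq]; ring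

section Hoeffding

variable {ι α : Type*} [Fintype ι] [Fintype α]

theorem sum_exp_mul_le_of_sum_eq_zero {f : α → ℝ} (hf : ∀ a, |f a| ≤ 1) (hf₀ : ∑ a, f a = 0)
    (t : ℝ) : ∑ a, exp (t * f a) ≤ Fintype.card α * exp (t ^ 2 / 2) := by
  calc ∑ a, exp (t * f a) ≤ ∑ a, (cosh t + f a * sinh t) :=
        sum_le_sum fun a _ ↦ exp_mul_le_cosh_add_mul_sinh t (hf a)
    _ = Fintype.card α * cosh t := by
        rw [sum_add_distrib, ← sum_mul, hf₀, zero_mul, add_zero, sum_const, card_univ,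
          nsmul_eq_mul]
    _ ≤ Fintype.card α * exp (t ^ 2 / 2) := by gcongr; exact cosh_le_exp_half_sq t

theorem sum_pi_exp_mul_sum_le_of_sum_eq_zero [DecidableEq ι] {f : α → ℝ}
    (hf : ∀ a, |f a| ≤ 1) (hf₀ : ∑ a, f a = 0) (t : ℝ) :
    ∑ k : ι → α, exp (t * ∑ i, f (k i)) ≤
      Fintype.card α ^ Fintype.card ι * exp (Fintype.card ι * (t ^ 2 / 2)) := by
  calc ∑ k : ι → α, exp (t * ∑ i, f (k i))
      = ∏ _i : ι, ∑ a, exp (t * f a) := by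
        rw [prod_univ_sum, Fintype.piFinset_univ]
        exact sum_congr rfl fun k _ ↦ by rw [mul_sum, exp_sum]
    _ ≤ ∏ _i : ι, (Fintype.card α * exp (t ^ 2 / 2)) :=
        prod_le_prod (fun _ _ ↦ by positivity)
          fun _ _ ↦ sum_exp_mul_le_of_sum_eq_zero hf hf₀ t
    _ = Fintype.card α ^ Fintype.card ι * exp (Fintype.card ι * (t ^ 2 / 2)) := by
        rw [prod_const, card_univ, mul_pow, ← exp_nat_mul]

theorem exists_forall_mul_abs_sum_le [Nonempty α] {β : Type*} (J : Finset β) {f : β → α → ℝ}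
    (hf : ∀ j ∈ J, ∀ a, |f j a| ≤ 1) (hf₀ : ∀ j ∈ J, ∑ a, f j a = 0) (t : ℝ) :
    ∃ k : ι → α, ∀ j ∈ J,
      t * |∑ i, f j (k i)| ≤ log (2 * #J) + Fintype.card ι * (t ^ 2 / 2) := by
  classical
  set B := exp (Fintype.card ι * (t ^ 2 / 2))
  set F : (ι → α) → ℝ := fun k ↦
    ∑ j ∈ J, (exp (t * ∑ i, f j (k i)) + exp (-t * ∑ i, f j (k i)))
  have hsum : ∑ k, F k ≤ ∑ _k : ι → α, 2 * #J * B := by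
    rw [sum_const, card_univ, Fintype.card_fun, sum_comm, nsmul_eq_mul]
    calc ∑ j ∈ J, ∑ k : ι → α, (exp (t * ∑ i, f j (k i)) + exp (-t * ∑ i, f j (k i)))
        ≤ ∑ _j ∈ J, 2 * (Fintype.card α ^ Fintype.card ι * B) := by
          refine sum_le_sum fun j hj ↦ ?_
          rw [sum_add_distrib, two_mul]
          have hneg := sum_pi_exp_mul_sum_le_of_sum_eq_zero (ι := ι) (hf j hj) (hf₀ j hj) (-t)
          rw [neg_sq] at hneg
          exact add_le_add (sum_pi_exp_mul_sum_le_of_sum_eq_zero (hf j hj) (hf₀ j hj) t) hneg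
      _ = _ := by rw [sum_const, nsmul_eq_mul]; push_cast; ring
  obtain ⟨k, -, hk⟩ := exists_le_of_sum_le univ_nonempty hsum
  refine ⟨k, fun j hj ↦ ?_⟩
  set S := ∑ i, f j (k i)
  have hJ : (0 : ℝ) < 2 * #J := by have := card_pos.mpr ⟨j, hj⟩; positivity
  have hexp : exp (t * |S|) ≤ 2 * #J * B := by
    calc exp (t * |S|) ≤ exp (t * S) + exp (-t * S) := by
          rcases abs_cases S with ⟨h, -⟩ | ⟨h, -⟩ <;> rw [h]
          · linarith [exp_pos (-t * S)]
          · rw [mul_neg, ← neg_mul]; linarith [exp_pos (t * S)]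
      _ ≤ F k := single_le_sum (f := fun j ↦ exp (t * ∑ i, f j (k i)) +
          exp (-t * ∑ i, f j (k i))) (fun _ _ ↦ by positivity) hj
      _ ≤ 2 * #J * B := hk
  rwa [← exp_log hJ, ← exp_add, exp_le_exp] at hexp

end Hoeffding

theorem log_lt_logb_two {x : ℝ} (hx : 1 < x) : log x < logb 2 x := by
  rw [logb, lt_div_iff₀ (log_pos one_lt_two)]
  have := log_pos hx
  nlinarith [log_two_lt_d9]

theorem one_div_sq_mul_sq_lt_of_sqrt_mul_abs_le {ε L d S : ℝ} (hε : 0 < ε)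
    (hL : L < ε * d / 2) (hS : √ε * |S| ≤ L + d * (√ε ^ 2 / 2)) :
    1 / d ^ 2 * S ^ 2 < ε := by
  rw [sq_sqrt hε.le] at hS
  have hd : 0 < d := by nlinarith [mul_nonneg (sqrt_nonneg ε) (abs_nonneg S)]
  have hS' : |S| < √ε * d := by
    refine lt_of_mul_lt_mul_left ?_ (sqrt_nonneg ε)
    rw [← mul_assoc, mul_self_sqrt hε.le]
    linarith
  calc 1 / d ^ 2 * S ^ 2 = 1 / d ^ 2 * |S| ^ 2 := by rw [sq_abs]
    _ < 1 / d ^ 2 * (√ε * d) ^ 2 := by gcongr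
    _ = ε := by rw [mul_pow, sq_sqrt hε.le]; field_simp

/-- Existence of a good sequence of parameters `k_1, …, k_d ∈ {0,…,p-1}` such that
for every residue `j ∈ {1,…,p-1}`, `(1/d²)(∑ᵢ cos(2πkᵢj/p))² < ε`,
whenever `d ≥ 2·log₂(2p)/ε`. -/
theorem exists_good_parameters (p : ℕ) (hp : p.Prime) (ε : ℝ) (hε : 0 < ε)
    (d : ℕ) (hd : 2 * Real.logb 2 (2 * p) / ε ≤ d) :
    ∃ k : Fin d → ℕ, (∀ i, k i < p) ∧
      ∀ j ∈ Finset.Ico 1 p,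
        (1 / (d : ℝ) ^ 2) *
          (∑ i, Real.cos (2 * Real.pi * (k i : ℝ) * (j : ℝ) / p)) ^ 2 < ε := by
  have hp₂ : (2 : ℝ) ≤ p := by exact_mod_cast hp.two_le
  have : Nonempty (Fin p) := ⟨⟨0, hp.pos⟩⟩
  obtain ⟨k, hk⟩ := exists_forall_mul_abs_sum_le (ι := Fin d) (Ico 1 p)
    (f := fun j (m : Fin p) ↦ cos (2 * π * (m : ℕ) * j / p)) (fun _ _ _ ↦ abs_cos_le_one _)
    (fun j hj ↦ sum_cos_two_pi_mul_div_eq_zero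
      (Nat.not_dvd_of_pos_of_lt (mem_Ico.mp hj).1 (mem_Ico.mp hj).2)) (√ε)
  refine ⟨fun i ↦ k i, fun i ↦ (k i).isLt, fun j hj ↦ ?_⟩
  have hlog : log (2 * #(Ico 1 p)) < ε * d / 2 := by
    have hcard : (#(Ico 1 p) : ℝ) ≤ p := by rw [Nat.card_Ico]; exact_mod_cast Nat.sub_le p 1
    calc log (2 * #(Ico 1 p)) ≤ log (2 * p) :=
          log_le_log (by simpa using Nat.sub_pos_of_lt hp.one_lt) (by linarith)
      _ < logb 2 (2 * p) := log_lt_logb_two (by linarith)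
      _ ≤ ε * d / 2 := by rw [div_le_iff₀ hε] at hd; linarith
  exact one_div_sq_mul_sq_lt_of_sqrt_mul_abs_le hε hlog
    (by simpa only [Fintype.card_fin] using hk j hj)
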